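/- arXiv:2406.19063 — 10 statements merged into one kernel-verified Lean document; each statement's English description precedes it below -/
import Mathlib

section
/- If a utility function u : A × Θ → ℝ has directionally single-crossing differences (DSCD), then u has convex choice: for every subset B ⊆ A and every a ∈ B, the set of types θ for which a is the unique maximizer of u(·,θ) over B is convex. -/
open Finset

/-- Dot product on `Fin n → ℝ`. -/
def dotp {n : ℕ} (x y : Fin n → ℝ) : ℝ := ∑ i, x i * y i

/-- `f` is directionally single crossing on `Θ` in direction `α`. -/
def DSCdir {n : ℕ} (Θ : Set (Fin n → ℝ)) (f : (Fin n → ℝ) → ℝ) (α : Fin n → ℝ) : Prop :=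
  ∀ θ ∈ Θ, ∀ θ' ∈ Θ, 0 ≤ dotp (θ - θ') α → Real.sign (f θ') ≤ Real.sign (f θ)

/-- `f` is directionally single crossing on `Θ` (in some nonzero direction). -/
def DSC {n : ℕ} (Θ : Set (Fin n → ℝ)) (f : (Fin n → ℝ) → ℝ) : Prop :=
  ∃ α : Fin n → ℝ, α ≠ 0 ∧ DSCdir Θ f α

/-- The set of types in `Θ` for which `a` is the unique maximizer of `u · θ` over `B`. -/
def UniqueChoice {n : ℕ} {A : Type*} (Θ : Set (Fin n → ℝ)) (u : A → (Fin n → ℝ) → ℝ)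
    (B : Set A) (a : A) : Set (Fin n → ℝ) :=
  {θ ∈ Θ | ∀ b ∈ B, b ≠ a → u b θ < u a θ}

/-- `u` has convex choice on `Θ`. -/
def ConvexChoice {n : ℕ} {A : Type*} (Θ : Set (Fin n → ℝ)) (u : A → (Fin n → ℝ) → ℝ) : Prop :=
  ∀ (B : Set A), ∀ a ∈ B, Convex ℝ (UniqueChoice Θ u B a)

/-- `u` has directionally single-crossing differences. -/
def DSCD {n : ℕ} {A : Type*} (Θ : Set (Fin n → ℝ)) (u : A → (Fin n → ℝ) → ℝ) : Prop :=
  ∀ a a' : A, DSC Θ (fun θ => u a θ - u a' θ)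

/-- `f` strictly violates DSC on `Θ`. -/
def StrictViolDSC {n : ℕ} (Θ : Set (Fin n → ℝ)) (f : (Fin n → ℝ) → ℝ) : Prop :=
  ∀ α : Fin n → ℝ, α ≠ 0 → ∃ θ ∈ Θ, ∃ θ' ∈ Θ, ∃ θ'' ∈ Θ,
    dotp α θ < dotp α θ' ∧ dotp α θ' < dotp α θ'' ∧
    ((min (f θ) (f θ'') > 0 ∧ f θ' < 0) ∨ (min (f θ) (f θ'') < 0 ∧ 0 < f θ'))

/-- `u` has regular indifferences. -/
def RegularIndiff {n : ℕ} {A : Type*} (Θ : Set (Fin n → ℝ)) (u : A → (Fin n → ℝ) → ℝ) : Prop :=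
  ∀ (a' a'' : A), ∀ θ' ∈ Θ, ∀ θ'' ∈ Θ, ∀ θ ∈ segment ℝ θ' θ'',
    θ ≠ θ' → θ ≠ θ'' → u a' θ' > u a'' θ' → u a' θ'' = u a'' θ'' → u a' θ > u a'' θ

/-- Incentive compatibility of a mechanism on a type space `Θ'`. -/
def IC {n : ℕ} {A : Type*} (Θ' : Set (Fin n → ℝ)) (u : A → (Fin n → ℝ) → ℝ)
    (m : (Fin n → ℝ) → A) : Prop :=
  ∀ θ ∈ Θ', ∀ τ ∈ Θ', u (m τ) θ ≤ u (m θ) θ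

/-- Local incentive compatibility: every type has a relatively open neighborhood on which
neither it nor the types in the neighborhood want to mimic each other. -/
def LocalIC {n : ℕ} {A : Type*} (Θ' : Set (Fin n → ℝ)) (u : A → (Fin n → ℝ) → ℝ)
    (m : (Fin n → ℝ) → A) : Prop :=
  ∀ θ ∈ Θ', ∃ ε > (0:ℝ), ∀ τ ∈ Θ', dist τ θ < ε →
    u (m τ) θ ≤ u (m θ) θ ∧ u (m θ) τ ≤ u (m τ) τ

/-- `f` is strictly directionally single crossing on `Θ`. -/
def StrictDSC {n : ℕ} (Θ : Set (Fin n → ℝ)) (f : (Fin n → ℝ) → ℝ) : Prop :=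
  ∃ α : Fin n → ℝ, α ≠ 0 ∧ DSCdir Θ f α ∧
    ((∀ θ ∈ Θ, f θ = 0) ∨
      (∀ θ ∈ Θ, ∀ θ' ∈ Θ, 0 < dotp (θ - θ') α → f θ' = 0 → f θ ≠ 0))

/-- `u` has strict directionally single-crossing differences. -/
def StrictDSCD {n : ℕ} {A : Type*} (Θ : Set (Fin n → ℝ)) (u : A → (Fin n → ℝ) → ℝ) : Prop :=
  ∀ a a' : A, StrictDSC Θ (fun θ => u a θ - u a' θ)

/-- `f` is DSC-preserving: every finite linear combination of the `f a`'s is DSC. -/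
def DSCPreserving {n : ℕ} {A : Type*} (Θ : Set (Fin n → ℝ)) (f : A → (Fin n → ℝ) → ℝ) : Prop :=
  ∀ (k : ℕ) (as : Fin k → A) (lam : Fin k → ℝ),
    DSC Θ (fun θ => ∑ i, lam i * f (as i) θ)

/-- DSCD implies convex choice. -/
theorem dscd_implies_convexChoice {n : ℕ} {A : Type*} (Θ : Set (Fin n → ℝ)) (hΘ : Convex ℝ Θ)
    (u : A → (Fin n → ℝ) → ℝ) (h : DSCD Θ u) : ConvexChoice Θ u := by
  intro B a _ha θ hθ θ' hθ' s t hs ht hst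
  obtain ⟨hθΘ, hθmax⟩ := hθ
  obtain ⟨hθ'Θ, hθ'max⟩ := hθ'
  have hmem : s • θ + t • θ' ∈ Θ := hΘ hθΘ hθ'Θ hs ht hst
  refine ⟨hmem, ?_⟩
  intro b hb hba
  obtain ⟨α, hα0, hαd⟩ := h a b
  have key : ∀ x y : Fin n → ℝ, ∀ c : ℝ, dotp (c • x - y) α = c * dotp x α - dotp y α := by
    intro x y c
    simp [dotp, sub_mul, mul_assoc, Finset.sum_sub_distrib, Finset.mul_sum]
  have hdlin : ∀ y : Fin n → ℝ, dotp (s • θ + t • θ' - y) α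
      = s * dotp θ α + t * dotp θ' α - dotp y α := by
    intro y
    simp [dotp, add_mul, sub_mul, mul_assoc, Finset.sum_add_distrib,
      Finset.sum_sub_distrib, Finset.mul_sum]
  have hfθ : 0 < u a θ - u b θ := by linarith [hθmax b hb hba]
  have hfθ' : 0 < u a θ' - u b θ' := by linarith [hθ'max b hb hba]
  have hpos : 0 < u a (s • θ + t • θ') - u b (s • θ + t • θ') := by
    have hsign : (1:ℝ) ≤ Real.sign (u a (s • θ + t • θ') - u b (s • θ + t • θ')) := by
      rcases le_total (dotp θ α) (dotp θ' α) with hle | hle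
      · have h1 : 0 ≤ dotp (s • θ + t • θ' - θ) α := by
          rw [hdlin θ]
          have hseq : s = 1 - t := by linarith
          rw [hseq]
          have := mul_nonneg ht (sub_nonneg.2 hle)
          nlinarith
        have := hαd _ hmem θ hθΘ h1
        rwa [Real.sign_of_pos hfθ] at this
      · have h1 : 0 ≤ dotp (s • θ + t • θ' - θ') α := by
          rw [hdlin θ']
          have hteq : t = 1 - s := by linarith
          rw [hteq]
          have := mul_nonneg hs (sub_nonneg.2 hle)
          nlinarith
        have := hαd _ hmem θ' hθ'Θ h1
        rwa [Real.sign_of_pos hfθ'] at this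
    rcases lt_trichotomy (u a (s • θ + t • θ') - u b (s • θ + t • θ')) 0 with hlt | heq | hgt
    · rw [Real.sign_of_neg hlt] at hsign; linarith
    · rw [heq, Real.sign_zero] at hsign; linarith
    · exact hgt
  linarith
end

section
/- If u has convex choice and regular indifferences, then on any line segment Θ' ⊆ Θ, every locally incentive compatible mechanism m : Θ' → A is incentive compatible. -/
open Finset

/-- under convex choice and regular indifferences, on any line segment in `Θ`
every locally IC mechanism is IC. -/
theorem localIC_implies_IC_on_segments {n : ℕ} {A : Type*}
    (Θ : Set (Fin n → ℝ)) (hΘ : Convex ℝ Θ) (u : A → (Fin n → ℝ) → ℝ)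
    (hcc : ConvexChoice Θ u) (hri : RegularIndiff Θ u)
    (p : Fin n → ℝ) (hp : p ∈ Θ) (q : Fin n → ℝ) (hq : q ∈ Θ)
    (m : (Fin n → ℝ) → A) (hm : LocalIC (segment ℝ p q) u m) :
    IC (segment ℝ p q) u m := by
  classical
  rcases eq_or_ne p q with rfl | hpq
  · intro x hx y hy
    rw [segment_same] at hx hy
    rw [Set.mem_singleton_iff] at hx hy
    subst hx; subst hy
    exact le_refl _
  · have hv : q - p ≠ 0 := sub_ne_zero.mpr (Ne.symm hpq)
    set v : Fin n → ℝ := q - p with hvdef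
    set θf : ℝ → (Fin n → ℝ) := fun t => p + t • v with hθf
    have hseg : ∀ t : ℝ, 0 ≤ t → t ≤ 1 → θf t ∈ segment ℝ p q := by
      intro t h0 h1
      rw [segment_eq_image']
      exact ⟨t, ⟨h0, h1⟩, rfl⟩
    have hmemΘ : ∀ t : ℝ, 0 ≤ t → t ≤ 1 → θf t ∈ Θ := fun t h0 h1 =>
      hΘ.segment_subset hp hq (hseg t h0 h1)
    have hsub : ∀ s t : ℝ, θf s - θf t = (s - t) • v := by
      intro s t
      simp only [hθf, sub_smul]
      abel
    have hinj : ∀ s t : ℝ, s ≠ t → θf s ≠ θf t := by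
      intro s t hst h
      have h0 : (s - t) • v = 0 := by rw [← hsub s t, h, sub_self]
      rcases smul_eq_zero.mp h0 with h' | h'
      · exact hst (sub_eq_zero.mp h')
      · exact hv h'
    have hbet : ∀ s t r : ℝ, s ≤ t → t ≤ r → θf t ∈ segment ℝ (θf s) (θf r) := by
      intro s t r hst htr
      rcases eq_or_lt_of_le (hst.trans htr) with heq | hlt
      · have hts : t = s := le_antisymm (heq ▸ htr) hst
        rw [hts]
        exact left_mem_segment ℝ _ _
      · have hrs : r - s ≠ 0 := ne_of_gt (by linarith)
        refine ⟨(r - t)/(r - s), (t - s)/(r - s), div_nonneg (by linarith) (by linarith),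
          div_nonneg (by linarith) (by linarith), by field_simp; ring, ?_⟩
        show ((r - t)/(r - s)) • (p + s • v) + ((t - s)/(r - s)) • (p + r • v) = p + t • v
        match_scalars <;> field_simp <;> ring
    have key : ∀ (a b : A), ∀ x ∈ Θ, ∀ y ∈ Θ, ∀ z ∈ segment ℝ x y,
        z ≠ x → z ≠ y → u b x ≤ u a x → u a z ≤ u b z → u a y ≤ u b y := by
      intro a b x hx y hy z hz hzx hzy hbx hz'
      by_contra hcon
      push_neg at hcon
      rcases lt_or_eq_of_le hbx with hlt | heq
      · have hba : b ≠ a := by rintro rfl; exact lt_irrefl _ hlt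
        have hconv := hcc {a, b} a (Set.mem_insert _ _)
        have hxm : x ∈ UniqueChoice Θ u {a, b} a := by
          refine ⟨hx, ?_⟩
          intro c hc hca
          rcases hc with rfl | hc
          · exact absurd rfl hca
          · rw [Set.mem_singleton_iff] at hc; subst hc; exact hlt
        have hym : y ∈ UniqueChoice Θ u {a, b} a := by
          refine ⟨hy, ?_⟩
          intro c hc hca
          rcases hc with rfl | hc
          · exact absurd rfl hca
          · rw [Set.mem_singleton_iff] at hc; subst hc; exact hcon
        have hzm := hconv.segment_subset hxm hym hz
        exact absurd hz' (not_le.mpr (hzm.2 b (Set.mem_insert_of_mem _ rfl) hba))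
      · have hz'' : z ∈ segment ℝ y x := by rw [segment_symm]; exact hz
        exact absurd (hri a b y hy x hx z hz'' hzy hzx hcon heq.symm) (not_lt.mpr hz')
    set P : ℝ → ℝ → Prop := fun s t =>
      u (m (θf t)) (θf s) ≤ u (m (θf s)) (θf s) ∧
      u (m (θf s)) (θf t) ≤ u (m (θf t)) (θf t) with hP
    have ptrans : ∀ s t r : ℝ, 0 ≤ s → s < t → t < r → r ≤ 1 →
        P s t → P t r → P s r := by
      intro s t r h0 hst htr h1 h₁ h₂
      have hsmem := hmemΘ s h0 (by linarith)
      have hrmem := hmemΘ r (by linarith) h1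
      have hbet1 := hbet s t r hst.le htr.le
      have hbet2 : θf t ∈ segment ℝ (θf r) (θf s) := by rw [segment_symm]; exact hbet1
      have hne1 : θf t ≠ θf s := hinj t s hst.ne'
      have hne2 : θf t ≠ θf r := hinj t r htr.ne
      constructor
      · have h3 : u (m (θf r)) (θf s) ≤ u (m (θf t)) (θf s) :=
          key (m (θf r)) (m (θf t)) (θf r) hrmem (θf s) hsmem (θf t) hbet2 hne2 hne1
            h₂.2 h₂.1
        exact h3.trans h₁.1
      · have h3 : u (m (θf s)) (θf r) ≤ u (m (θf t)) (θf r) :=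
          key (m (θf s)) (m (θf t)) (θf s) hsmem (θf r) hrmem (θf t) hbet1 hne1 hne2
            h₁.1 h₁.2
        exact h3.trans h₂.2
    have hnorm : (0:ℝ) < ‖v‖ := norm_pos_iff.mpr hv
    have hdist : ∀ s t : ℝ, dist (θf t) (θf s) = |t - s| * ‖v‖ := by
      intro s t
      rw [dist_eq_norm, hsub, norm_smul, Real.norm_eq_abs]
    have main : ∀ s t0 : ℝ, 0 ≤ s → s ≤ t0 → t0 ≤ 1 → P s t0 := by
      intro s t0 h0 hst ht1
      set T : Set ℝ := {t | (s ≤ t ∧ t ≤ t0) ∧ P s t} with hT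
      have hsT : s ∈ T := ⟨⟨le_refl s, hst⟩, le_refl _, le_refl _⟩
      have hTne : T.Nonempty := ⟨s, hsT⟩
      have hTbdd : BddAbove T := ⟨t0, fun t ht => ht.1.2⟩
      set r := sSup T with hr
      have hsr : s ≤ r := le_csSup hTbdd hsT
      have hrt0 : r ≤ t0 := csSup_le hTne fun t ht => ht.1.2
      have hr0 : (0:ℝ) ≤ r := h0.trans hsr
      have hr1 : r ≤ 1 := hrt0.trans ht1
      obtain ⟨ε, hε, hloc⟩ := hm (θf r) (hseg r hr0 hr1)
      have hδ : 0 < ε / ‖v‖ := div_pos hε hnorm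
      have hPsr : P s r := by
        obtain ⟨t, htT, htlt⟩ := exists_lt_of_lt_csSup hTne
          (show r - ε / ‖v‖ < r by linarith)
        have htr : t ≤ r := le_csSup hTbdd htT
        rcases eq_or_lt_of_le htr with rfl | htr'
        · exact htT.2
        · have hdlt : dist (θf t) (θf r) < ε := by
            rw [hdist, abs_of_nonpos (by linarith)]
            calc -(t - r) * ‖v‖ < (ε / ‖v‖) * ‖v‖ := by
                  apply mul_lt_mul_of_pos_right _ hnorm
                  linarith
              _ = ε := div_mul_cancel₀ _ hnorm.ne'
          have hPt := hloc (θf t) (hseg t (h0.trans htT.1.1) (htT.1.2.trans ht1)) hdlt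
          rcases eq_or_lt_of_le htT.1.1 with rfl | hst'
          · exact ⟨hPt.2, hPt.1⟩
          · exact ptrans s t r h0 hst' htr' hr1 htT.2 ⟨hPt.2, hPt.1⟩
      have hreq : r = t0 := by
        by_contra hne
        have hlt : r < t0 := lt_of_le_of_ne hrt0 hne
        set t := min t0 (r + ε / ‖v‖ / 2) with ht
        have hrt' : r < t := lt_min hlt (by linarith)
        have htt0 : t ≤ t0 := min_le_left _ _
        have ht1' : t ≤ 1 := htt0.trans ht1
        have hdlt : dist (θf t) (θf r) < ε := by
          rw [hdist, abs_of_nonneg (by linarith)]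
          have h5 : t - r ≤ ε / ‖v‖ / 2 := by
            have := min_le_right t0 (r + ε / ‖v‖ / 2)
            simp only [← ht] at this
            linarith
          calc (t - r) * ‖v‖ < (ε / ‖v‖) * ‖v‖ := by
                apply mul_lt_mul_of_pos_right _ hnorm
                linarith
            _ = ε := div_mul_cancel₀ _ hnorm.ne'
        have hPt := hloc (θf t) (hseg t (by linarith) ht1') hdlt
        have hPrt : P r t := ⟨hPt.1, hPt.2⟩
        have hPst : P s t := by
          rcases eq_or_lt_of_le hsr with heq | hsr'
          · rw [heq]; exact hPrt
          · exact ptrans s r t h0 hsr' hrt' ht1' hPsr hPrt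
        have : t ≤ r := le_csSup hTbdd ⟨⟨hsr.trans hrt'.le, htt0⟩, hPst⟩
        linarith
      rw [← hreq]
      exact hPsr
    intro x hx y hy
    rw [segment_eq_image'] at hx hy
    obtain ⟨a, ⟨ha0, ha1⟩, rfl⟩ := hx
    obtain ⟨b, ⟨hb0, hb1⟩, rfl⟩ := hy
    rcases le_total a b with hab | hab
    · exact (main a b ha0 hab hb1).1
    · exact (main b a hb0 hab ha1).2
end

section
/- If u violates convex choice, then there is a line segment Θ' ⊆ Θ and a mechanism m : Θ' → A that is locally incentive compatible but not incentive compatible. -/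
open Finset

/-- if convex choice fails, some line segment in `Θ` admits a mechanism that is
locally IC but not IC. -/
theorem not_convexChoice_implies_localIC_not_IC {n : ℕ} {A : Type*}
    (Θ : Set (Fin n → ℝ)) (hΘ : Convex ℝ Θ) (u : A → (Fin n → ℝ) → ℝ)
    (h : ¬ ConvexChoice Θ u) :
    ∃ p ∈ Θ, ∃ q ∈ Θ, ∃ m : (Fin n → ℝ) → A,
      LocalIC (segment ℝ p q) u m ∧ ¬ IC (segment ℝ p q) u m := by
  classical
  rw [ConvexChoice] at h
  push_neg at h
  obtain ⟨B, a, haB, hnc⟩ := h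
  rw [convex_iff_segment_subset] at hnc
  push_neg at hnc
  obtain ⟨θ₁, h1, θ₂, h2, hnsub⟩ := hnc
  rw [Set.not_subset] at hnsub
  obtain ⟨θ', hseg, hout⟩ := hnsub
  obtain ⟨h1Θ, h1u⟩ := h1
  obtain ⟨h2Θ, h2u⟩ := h2
  have hθ'Θ : θ' ∈ Θ := hΘ.segment_subset h1Θ h2Θ hseg
  have hb : ∃ b ∈ B, b ≠ a ∧ u a θ' ≤ u b θ' := by
    by_contra hc
    push_neg at hc
    exact hout ⟨hθ'Θ, fun b hbB hba => hc b hbB hba⟩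
  obtain ⟨b, hbB, hba, hbθ'⟩ := hb
  have hb1 : u b θ₁ < u a θ₁ := h1u b hbB hba
  have hb2 : u b θ₂ < u a θ₂ := h2u b hbB hba
  set v : Fin n → ℝ := θ₂ - θ₁ with hv
  rw [segment_eq_image'] at hseg
  obtain ⟨s, ⟨hs0, hs1⟩, hφ⟩ := hseg
  -- hφ : θ₁ + s • v = θ'
  have hne12 : θ₁ ≠ θ₂ := by
    rintro rfl
    apply hout
    have : θ' = θ₁ := by
      rw [← hφ]; simp [hv]
    rw [this]
    exact ⟨h1Θ, h1u⟩
  have hvne : v ≠ 0 := sub_ne_zero.mpr (Ne.symm hne12)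
  have hvnorm : (0:ℝ) < ‖v‖ := norm_pos_iff.mpr hvne
  have hinj : ∀ t r : ℝ, θ₁ + t • v = θ₁ + r • v → t = r := by
    intro t r htr
    have h2 : t • v = r • v := add_left_cancel htr
    have h3 : (t - r) • v = 0 := by rw [sub_smul, h2, sub_self]
    rcases smul_eq_zero.mp h3 with h' | h'
    · linarith [h']
    · exact absurd h' hvne
  have hdist : ∀ t r : ℝ, dist (θ₁ + t • v) (θ₁ + r • v) = |t - r| * ‖v‖ := by
    intro t r
    rw [dist_eq_norm]
    have : (θ₁ + t • v) - (θ₁ + r • v) = (t - r) • v := by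
      rw [sub_smul]; abel
    rw [this, norm_smul, Real.norm_eq_abs]
  have hsne0 : s ≠ 0 := by
    rintro rfl
    apply hout
    have : θ' = θ₁ := by rw [← hφ]; simp
    rw [this]; exact ⟨h1Θ, h1u⟩
  have hsne1 : s ≠ 1 := by
    rintro rfl
    apply hout
    have : θ' = θ₂ := by rw [← hφ]; simp [hv]
    rw [this]; exact ⟨h2Θ, h2u⟩
  have hs0' : 0 < s := lt_of_le_of_ne hs0 (Ne.symm hsne0)
  have hs1' : s < 1 := lt_of_le_of_ne hs1 hsne1
  -- the mechanism
  set C : (Fin n → ℝ) → Prop :=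
    fun θ => (∃ t, 0 ≤ t ∧ t ≤ s ∧ θ = θ₁ + t • v) ∧ u b θ < u a θ with hC
  set m : (Fin n → ℝ) → A := fun θ => if C θ then a else b with hm
  have hmem : ∀ θ ∈ segment ℝ θ₁ θ₂, ∃ r : ℝ, 0 ≤ r ∧ r ≤ 1 ∧ θ = θ₁ + r • v := by
    intro θ hθ
    rw [segment_eq_image'] at hθ
    obtain ⟨r, ⟨hr0, hr1⟩, hr⟩ := hθ
    exact ⟨r, hr0, hr1, hr.symm⟩
  have hmCa : ∀ θ, C θ → m θ = a := fun θ h' => if_pos h'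
  have hmCb : ∀ θ, ¬ C θ → m θ = b := fun θ h' => if_neg h'
  refine ⟨θ₁, h1Θ, θ₂, h2Θ, m, ?_, ?_⟩
  · -- LocalIC
    intro θ hθseg
    obtain ⟨r, hr0, hr1, rfl⟩ := hmem θ hθseg
    by_cases hCθ : C (θ₁ + r • v)
    · -- m θ = a, and r < s
      obtain ⟨⟨t, ht0, hts, htθ⟩, hba'⟩ := hCθ
      have htr : t = r := hinj t r htθ.symm
      have hrs : r < s := by
        rcases lt_or_eq_of_le (htr ▸ hts) with h' | h'
        · exact h'
        · exfalso
          have : θ₁ + r • v = θ' := by rw [← hφ, h']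
          rw [this] at hba'
          linarith
      refine ⟨(s - r) * ‖v‖, mul_pos (by linarith) hvnorm, ?_⟩
      intro τ hτseg hτd
      obtain ⟨ρ, hρ0, hρ1, rfl⟩ := hmem τ hτseg
      rw [hdist] at hτd
      have hρs : ρ < s := by
        have : |ρ - r| < s - r := by
          have := (mul_lt_mul_iff_left₀ hvnorm).mp hτd
          exact this
        have := abs_lt.mp this
        linarith [this.2]
      rw [hmCa _ ⟨⟨t, ht0, hts, htθ⟩, hba'⟩]
      by_cases hCτ : C (θ₁ + ρ • v)
      · rw [hmCa _ hCτ]; exact ⟨le_refl _, le_refl _⟩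
      · rw [hmCb _ hCτ]
        constructor
        · exact le_of_lt hba'
        · -- ¬C τ but τ has parameter ρ ≤ s, so u a τ ≤ u b τ
          by_contra hc
          push_neg at hc
          exact hCτ ⟨⟨ρ, hρ0, le_of_lt hρs, rfl⟩, hc⟩
    · -- m θ = b
      rw [hmCb _ hCθ]
      by_cases hab : u a (θ₁ + r • v) ≤ u b (θ₁ + r • v)
      · refine ⟨1, one_pos, ?_⟩
        intro τ hτseg _
        by_cases hCτ : C τ
        · rw [hmCa _ hCτ]
          exact ⟨hab, le_of_lt hCτ.2⟩
        · rw [hmCb _ hCτ]; exact ⟨le_refl _, le_refl _⟩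
      · push_neg at hab
        -- so the ∃ part of C fails; hence r > s
        have hrs : s < r := by
          by_contra hc
          push_neg at hc
          exact hCθ ⟨⟨r, hr0, hc, rfl⟩, hab⟩
        refine ⟨(r - s) * ‖v‖, mul_pos (by linarith) hvnorm, ?_⟩
        intro τ hτseg hτd
        obtain ⟨ρ, hρ0, hρ1, rfl⟩ := hmem τ hτseg
        rw [hdist] at hτd
        have hρs : s < ρ := by
          have : |ρ - r| < r - s := (mul_lt_mul_iff_left₀ hvnorm).mp hτd
          have := abs_lt.mp this
          linarith [this.1]
        have hCτ : ¬ C (θ₁ + ρ • v) := by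
          rintro ⟨⟨t, ht0, hts, htθ⟩, -⟩
          have : t = ρ := hinj t ρ htθ.symm
          linarith
        rw [hmCb _ hCτ]
        exact ⟨le_refl _, le_refl _⟩
  · -- not IC
    intro hIC
    have hθ1seg : θ₁ ∈ segment ℝ θ₁ θ₂ := left_mem_segment ℝ θ₁ θ₂
    have hθ2seg : θ₂ ∈ segment ℝ θ₁ θ₂ := right_mem_segment ℝ θ₁ θ₂
    have hm1 : m θ₁ = a := by
      apply hmCa
      exact ⟨⟨0, le_refl _, hs0, by simp⟩, hb1⟩
    have hm2 : m θ₂ = b := by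
      apply hmCb
      rintro ⟨⟨t, ht0, hts, htθ⟩, -⟩
      have hθ2 : θ₂ = θ₁ + (1:ℝ) • v := by simp [hv]
      have : t = 1 := hinj t 1 (by rw [← htθ, ← hθ2])
      linarith
    have := hIC θ₂ hθ2seg θ₁ hθ1seg
    rw [hm1, hm2] at this
    linarith
end

section
/- If u violates regular indifferences, then there is a line segment Θ' ⊆ Θ and a mechanism m : Θ' → A that is locally incentive compatible but not incentive compatible. -/
open Finset

/-- if regular indifferences fails, some line segment in `Θ` admits a mechanism
that is locally IC but not IC. -/
theorem not_regularIndiff_implies_localIC_not_IC {n : ℕ} {A : Type*}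
    (Θ : Set (Fin n → ℝ)) (hΘ : Convex ℝ Θ) (u : A → (Fin n → ℝ) → ℝ)
    (h : ¬ RegularIndiff Θ u) :
    ∃ p ∈ Θ, ∃ q ∈ Θ, ∃ m : (Fin n → ℝ) → A,
      LocalIC (segment ℝ p q) u m ∧ ¬ IC (segment ℝ p q) u m := by
  classical
  rw [RegularIndiff] at h
  push_neg at h
  obtain ⟨a', a'', θ', hθ'Θ, θ'', hθ''Θ, θ, hθseg, hne', hne'', h1, h2, h3⟩ := h
  -- h1 : u a' θ' > u a'' θ',  h2 : u a' θ'' = u a'' θ'',  h3 : u a' θ ≤ u a'' θ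
  set d : Fin n → ℝ := θ' - θ'' with hddef
  have hd : d ≠ 0 := by
    intro hd0
    have : θ' = θ'' := by
      have := sub_eq_zero.mp hd0
      exact this
    rw [this, h2] at h1
    exact lt_irrefl _ h1
  -- θ ∈ segment θ'' θ'
  have hθseg' : θ ∈ segment ℝ θ'' θ' := segment_symm ℝ θ' θ'' ▸ hθseg
  rw [segment_eq_image'] at hθseg'
  obtain ⟨t₀, ht₀mem, hθeq0⟩ := hθseg'
  have hθeq : θ'' + t₀ • d = θ := hθeq0
  have hD : (0:ℝ) < dotp d d := by
    have hi : ∃ i, d i ≠ 0 := by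
      by_contra hc
      push_neg at hc
      exact hd (funext hc)
    obtain ⟨i, hi⟩ := hi
    exact Finset.sum_pos' (fun j _ => mul_self_nonneg _)
      ⟨i, Finset.mem_univ i, mul_self_pos.mpr hi⟩
  set D : ℝ := dotp d d with hDdef
  have ht₀0 : (0:ℝ) < t₀ := by
    rcases lt_or_eq_of_le ht₀mem.1 with h' | h'
    · exact h'
    · exfalso; apply hne''; rw [← hθeq, ← h']; simp
  have ht₀1 : t₀ < 1 := by
    rcases lt_or_eq_of_le ht₀mem.2 with h' | h'
    · exact h'
    · exfalso; apply hne'; rw [← hθeq, h', one_smul, hddef]; abel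
  set c : ℝ := t₀ * D with hcdef
  set m : (Fin n → ℝ) → A :=
    fun y => if dotp (y - θ'') d < c ∧ u a'' y ≤ u a' y then a' else a'' with hmdef
  -- value lemmas for m
  have hψ : ∀ s : ℝ, dotp ((θ'' + s • d) - θ'') d = s * D := by
    intro s
    rw [add_sub_cancel_left, hDdef]
    simp [dotp, Finset.mul_sum, mul_assoc]
  have hmgen : ∀ y, (m y = a' ∧ u a'' y ≤ u a' y) ∨ m y = a'' := by
    intro y
    by_cases hy : dotp (y - θ'') d < c ∧ u a'' y ≤ u a' y
    · left; exact ⟨if_pos hy, hy.2⟩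
    · right; exact if_neg hy
  have hopt : ∀ y, dotp (y - θ'') d < c →
      u a' y ≤ u (m y) y ∧ u a'' y ≤ u (m y) y := by
    intro y hy
    by_cases hc' : u a'' y ≤ u a' y
    · have : m y = a' := if_pos ⟨hy, hc'⟩
      rw [this]; exact ⟨le_refl _, hc'⟩
    · have : m y = a'' := if_neg (fun hcon => hc' hcon.2)
      rw [this]; exact ⟨(not_le.mp hc').le, le_refl _⟩
  have hmhigh : ∀ y, ¬ dotp (y - θ'') d < c → m y = a'' := by
    intro y hy
    exact if_neg (fun hcon => hy hcon.1)
  have hnormd : (0:ℝ) < ‖d‖ := norm_pos_iff.mpr hd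
  refine ⟨θ'', hθ''Θ, θ', hθ'Θ, m, ?_, ?_⟩
  · -- LocalIC
    intro x hx
    rw [segment_eq_image'] at hx
    obtain ⟨t, htmem, hxeq0⟩ := hx
    have hxeq : θ'' + t • d = x := hxeq0
    -- distance formula on the segment
    have hdist : ∀ s : ℝ, dist (θ'' + s • d) (θ'' + t • d) = |s - t| * ‖d‖ := by
      intro s
      rw [dist_eq_norm, add_sub_add_left_eq_sub, ← sub_smul, norm_smul, Real.norm_eq_abs]
    rcases lt_trichotomy t t₀ with hlt | heq | hgt
    · -- x strictly before θ : neighborhood stays before θ, all optimal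
      refine ⟨dist θ x, ?_, ?_⟩
      · rw [← hθeq, ← hxeq] at *
        rw [hdist t₀]
        exact mul_pos (abs_pos.mpr (sub_ne_zero.mpr hlt.ne')) hnormd
      · intro τ hτ hτd
        rw [segment_eq_image'] at hτ
        obtain ⟨s, hsmem, hτeq0⟩ := hτ
        have hτeq : θ'' + s • d = τ := hτeq0
        have hsd : |s - t| * ‖d‖ < |t₀ - t| * ‖d‖ := by
          rw [← hdist s, ← hdist t₀, hxeq, hθeq, hτeq]; exact hτd
        have habs : |s - t| < t₀ - t := by
          have := (mul_lt_mul_iff_of_pos_right hnormd).mp hsd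
          rwa [abs_of_pos (sub_pos.mpr hlt)] at this
        have hs : s < t₀ := by
          have := le_abs_self (s - t)
          linarith
        have hψτ : dotp (τ - θ'') d < c := by
          rw [← hτeq, hψ s, hcdef]
          exact (mul_lt_mul_iff_of_pos_right hD).mpr hs
        have hψx : dotp (x - θ'') d < c := by
          rw [← hxeq, hψ t, hcdef]
          exact (mul_lt_mul_iff_of_pos_right hD).mpr hlt
        constructor
        · rcases hmgen τ with ⟨hτ1, _⟩ | hτ2
          · rw [hτ1]; exact (hopt x hψx).1
          · rw [hτ2]; exact (hopt x hψx).2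
        · rcases hmgen x with ⟨hx1, _⟩ | hx2
          · rw [hx1]; exact (hopt τ hψτ).1
          · rw [hx2]; exact (hopt τ hψτ).2
    · -- x = θ : any neighborhood works
      have hxθ : x = θ := by rw [← hxeq, ← hθeq, heq]
      refine ⟨1, one_pos, ?_⟩
      intro τ hτ _
      have hmx : m x = a'' := by
        apply hmhigh
        rw [← hxeq, hψ t, heq, hcdef]
        exact lt_irrefl _
      constructor
      · rw [hmx, hxθ]
        rcases hmgen τ with ⟨hτ1, _⟩ | hτ2
        · rw [hτ1]; exact h3
        · rw [hτ2]
      · rw [hmx]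
        rcases hmgen τ with ⟨hτ1, hτ2⟩ | hτ2
        · rw [hτ1]; exact hτ2
        · rw [hτ2]
    · -- x strictly after θ : neighborhood stays after θ, everyone gets a''
      refine ⟨dist θ x, ?_, ?_⟩
      · rw [← hθeq, ← hxeq] at *
        rw [hdist t₀]
        exact mul_pos (abs_pos.mpr (sub_ne_zero.mpr hgt.ne)) hnormd
      · intro τ hτ hτd
        rw [segment_eq_image'] at hτ
        obtain ⟨s, hsmem, hτeq0⟩ := hτ
        have hτeq : θ'' + s • d = τ := hτeq0
        have hsd : |s - t| * ‖d‖ < |t₀ - t| * ‖d‖ := by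
          rw [← hdist s, ← hdist t₀, hxeq, hθeq, hτeq]; exact hτd
        have habs : |s - t| < t - t₀ := by
          have := (mul_lt_mul_iff_of_pos_right hnormd).mp hsd
          rwa [abs_of_neg (sub_neg.mpr hgt), neg_sub] at this
        have hs : t₀ < s := by
          have := neg_abs_le (s - t)
          linarith
        have hmτ : m τ = a'' := by
          apply hmhigh
          rw [← hτeq, hψ s, hcdef]
          exact not_lt.mpr ((mul_le_mul_iff_of_pos_right hD).mpr hs.le)
        have hmx : m x = a'' := by
          apply hmhigh
          rw [← hxeq, hψ t, hcdef]
          exact not_lt.mpr ((mul_le_mul_iff_of_pos_right hD).mpr hgt.le)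
        rw [hmτ, hmx]
        exact ⟨le_refl _, le_refl _⟩
  · -- not IC : type θ' envies θ''
    intro hIC
    have hmθ'' : m θ'' = a' := by
      apply if_pos
      constructor
      · have : dotp (θ'' - θ'') d = 0 := by simp [dotp]
        rw [this, hcdef]
        exact mul_pos ht₀0 hD
      · exact h2.ge
    have hmθ' : m θ' = a'' := by
      apply hmhigh
      have : dotp (θ' - θ'') d = D := by rw [hDdef, hddef]
      rw [this, hcdef]
      exact not_lt.mpr (by nlinarith)
    have := hIC θ' (right_mem_segment ℝ θ'' θ') θ'' (left_mem_segment ℝ θ'' θ')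
    rw [hmθ'', hmθ'] at this
    exact absurd h1 (not_lt.mpr this)
end

section
/- Strict DSCD implies both convex choice and regular indifferences (without any topological assumptions on Θ). -/
open Finset

private lemma pos_of_one_le_sign {x : ℝ} (h : (1:ℝ) ≤ Real.sign x) : 0 < x := by
  rcases lt_trichotomy x 0 with hx | hx | hx
  · rw [Real.sign_of_neg hx] at h; linarith
  · rw [hx, Real.sign_zero] at h; linarith
  · exact hx

private lemma nonneg_of_sign_nonneg {x : ℝ} (h : (0:ℝ) ≤ Real.sign x) : 0 ≤ x := by
  rcases lt_trichotomy x 0 with hx | hx | hx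
  · rw [Real.sign_of_neg hx] at h; linarith
  · exact hx.ge
  · exact hx.le

private lemma dotp_smul {n : ℕ} (t : ℝ) (v α : Fin n → ℝ) :
    dotp (t • v) α = t * dotp v α := by
  simp [dotp, Finset.mul_sum, mul_assoc]

private lemma combo_sub_right {n : ℕ} (t s : ℝ) (hts : t + s = 1) (x y : Fin n → ℝ) :
    t • x + s • y - y = t • (x - y) := by
  have hs : s = 1 - t := by linarith
  subst hs
  funext i
  simp only [Pi.add_apply, Pi.sub_apply, Pi.smul_apply, smul_eq_mul]
  ring

private lemma combo_sub_left {n : ℕ} (t s : ℝ) (hts : t + s = 1) (x y : Fin n → ℝ) :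
    t • x + s • y - x = s • (y - x) := by
  have ht : t = 1 - s := by linarith
  subst ht
  funext i
  simp only [Pi.add_apply, Pi.sub_apply, Pi.smul_apply, smul_eq_mul]
  ring

private lemma dotp_rev {n : ℕ} (x y α : Fin n → ℝ) :
    dotp (y - x) α = - dotp (x - y) α := by
  simp [dotp, ← Finset.sum_neg_distrib]
  congr 1
  funext i
  ring

/-- strict DSCD implies convex choice and regular indifferences. -/
theorem strictDSCD_implies_convexChoice_and_regularIndiff {n : ℕ} {A : Type*}
    (Θ : Set (Fin n → ℝ)) (hΘ : Convex ℝ Θ) (u : A → (Fin n → ℝ) → ℝ)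
    (h : StrictDSCD Θ u) : ConvexChoice Θ u ∧ RegularIndiff Θ u := by
  constructor
  · -- Convex choice: only needs DSCD part
    intro B a _ θ1 hθ1 θ2 hθ2 t s ht hs hts
    obtain ⟨hθ1Θ, h1⟩ := hθ1
    obtain ⟨hθ2Θ, h2⟩ := hθ2
    have hθΘ : t • θ1 + s • θ2 ∈ Θ := hΘ hθ1Θ hθ2Θ ht hs hts
    refine ⟨hθΘ, ?_⟩
    intro b hb hba
    obtain ⟨α, hα, hdsc, _⟩ := h a b
    have hf1 : 0 < u a θ1 - u b θ1 := sub_pos.mpr (h1 b hb hba)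
    have hf2 : 0 < u a θ2 - u b θ2 := sub_pos.mpr (h2 b hb hba)
    set θ := t • θ1 + s • θ2 with hθdef
    have hd2 : dotp (θ - θ2) α = t * dotp (θ1 - θ2) α := by
      rw [hθdef, combo_sub_right t s hts, dotp_smul]
    have hd1 : dotp (θ - θ1) α = s * dotp (θ2 - θ1) α := by
      rw [hθdef, combo_sub_left t s hts, dotp_smul]
    rcases le_or_gt 0 (dotp (θ1 - θ2) α) with hd | hd
    · have hkey := hdsc θ hθΘ θ2 hθ2Θ (by rw [hd2]; positivity)
      rw [Real.sign_of_pos hf2] at hkey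
      exact sub_pos.mp (pos_of_one_le_sign hkey)
    · have hrev : 0 ≤ dotp (θ2 - θ1) α := by rw [dotp_rev]; linarith
      have hkey := hdsc θ hθΘ θ1 hθ1Θ (by rw [hd1]; positivity)
      rw [Real.sign_of_pos hf1] at hkey
      exact sub_pos.mp (pos_of_one_le_sign hkey)
  · -- Regular indifferences
    intro a' a'' θ1 hθ1 θ2 hθ2 θ hθseg hne1 hne2 hgt heq
    obtain ⟨t, s, ht, hs, hts, hcomb⟩ := hθseg
    obtain ⟨α, hα, hdsc, hstrict⟩ := h a' a''
    have hθΘ : θ ∈ Θ := hcomb ▸ hΘ hθ1 hθ2 ht hs hts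
    have hf1 : 0 < u a' θ1 - u a'' θ1 := sub_pos.mpr hgt
    have hf2 : u a' θ2 - u a'' θ2 = 0 := sub_eq_zero.mpr heq
    have ht' : 0 < t := by
      rcases ht.lt_or_eq with h' | h'
      · exact h'
      · exfalso; apply hne2
        have hs1 : s = 1 := by linarith
        rw [← hcomb, ← h', hs1]; simp
    have hs' : 0 < s := by
      rcases hs.lt_or_eq with h' | h'
      · exact h'
      · exfalso; apply hne1
        have ht1 : t = 1 := by linarith
        rw [← hcomb, ← h', ht1]; simp
    have hd2 : dotp (θ - θ2) α = t * dotp (θ1 - θ2) α := by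
      rw [← hcomb, combo_sub_right t s hts, dotp_smul]
    have hd1 : dotp (θ - θ1) α = s * dotp (θ2 - θ1) α := by
      rw [← hcomb, combo_sub_left t s hts, dotp_smul]
    rcases le_or_gt (dotp (θ1 - θ2) α) 0 with hd | hd
    · -- use DSCdir from θ1
      have hrev : 0 ≤ dotp (θ2 - θ1) α := by rw [dotp_rev]; linarith
      have hkey := hdsc θ hθΘ θ1 hθ1 (by rw [hd1]; positivity)
      rw [Real.sign_of_pos hf1] at hkey
      exact sub_pos.mp (pos_of_one_le_sign hkey)
    · -- use DSCdir from θ2 plus strictness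
      have hpos : 0 < dotp (θ - θ2) α := by rw [hd2]; positivity
      have hkey := hdsc θ hθΘ θ2 hθ2 hpos.le
      simp only [hf2, Real.sign_zero] at hkey
      have hge : 0 ≤ u a' θ - u a'' θ := nonneg_of_sign_nonneg hkey
      rcases hstrict with hzero | hstrict
      · exact absurd (hzero θ1 hθ1) (by simpa using hf1.ne')
      · have hne := hstrict θ hθΘ θ2 hθ2 hpos hf2
        have : 0 < u a' θ - u a'' θ := lt_of_le_of_ne hge (by simpa using (Ne.symm hne))
        exact sub_pos.mp this
end

section
/- If Θ ⊆ ℝⁿ is open and convex and u has convex choice and regular indifferences, then u has convex weak choice: for all a, a' ∈ A, the set {θ : u(a,θ) ≥ u(a',θ)} is convex. -/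
open Finset

lemma lineInj {n : ℕ} (x y : Fin n → ℝ) (h : x ≠ y) {r r' : ℝ} (hrr : r ≠ r') :
    x + r • (y - x) ≠ x + r' • (y - x) := by
  intro h'
  have hv : y - x ≠ 0 := sub_ne_zero.mpr h.symm
  exact hrr (smul_left_injective ℝ hv (add_left_cancel h'))

lemma lineSeg {n : ℕ} (x y : Fin n → ℝ) {r₁ r₂ r₃ : ℝ} (h12 : r₁ < r₂) (h23 : r₂ < r₃) :
    x + r₂ • (y - x) ∈ openSegment ℝ (x + r₁ • (y - x)) (x + r₃ • (y - x)) := by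
  have hd : (0:ℝ) < r₃ - r₁ := by linarith
  refine ⟨(r₃ - r₂) / (r₃ - r₁), (r₂ - r₁) / (r₃ - r₁),
    by apply div_pos <;> linarith, by apply div_pos <;> linarith, ?_, ?_⟩
  · field_simp
    ring
  · funext i
    simp only [Pi.add_apply, Pi.smul_apply, Pi.sub_apply, smul_eq_mul]
    field_simp
    ring

lemma mem_uc_iff {n : ℕ} {A : Type*} (Θ : Set (Fin n → ℝ)) (u : A → (Fin n → ℝ) → ℝ)
    {a a' : A} (hne : a ≠ a') (θ : Fin n → ℝ) :
    θ ∈ UniqueChoice Θ u {a, a'} a ↔ θ ∈ Θ ∧ u a' θ < u a θ := by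
  constructor
  · rintro ⟨h1, h2⟩
    exact ⟨h1, h2 a' (by simp) (Ne.symm hne)⟩
  · rintro ⟨h1, h2⟩
    refine ⟨h1, ?_⟩
    rintro b hb hba
    rcases hb with rfl | rfl
    · exact absurd rfl hba
    · exact h2

lemma mem_uc_iff' {n : ℕ} {A : Type*} (Θ : Set (Fin n → ℝ)) (u : A → (Fin n → ℝ) → ℝ)
    {a a' : A} (hne : a ≠ a') (θ : Fin n → ℝ) :
    θ ∈ UniqueChoice Θ u {a, a'} a' ↔ θ ∈ Θ ∧ u a θ < u a' θ := by
  constructor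
  · rintro ⟨h1, h2⟩
    exact ⟨h1, h2 a (by simp) hne⟩
  · rintro ⟨h1, h2⟩
    refine ⟨h1, ?_⟩
    rintro b hb hba
    rcases hb with rfl | rfl
    · exact h2
    · exact absurd rfl hba

/-- Core step: strict preference at the left endpoint, weak at the right, gives strict
preference strictly in between. -/
lemma strictLeft {n : ℕ} {A : Type*} (Θ : Set (Fin n → ℝ))
    (u : A → (Fin n → ℝ) → ℝ)
    (hcc : ConvexChoice Θ u) (hri : RegularIndiff Θ u)
    {a a' : A} (hne : a ≠ a') {θL θ₂ θ₃ : Fin n → ℝ}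
    (hL : θL ∈ Θ) (h3 : θ₃ ∈ Θ)
    (huL : u a' θL < u a θL) (hu3 : u a' θ₃ ≤ u a θ₃)
    (hseg : θ₂ ∈ openSegment ℝ θL θ₃) (hn2L : θ₂ ≠ θL) (hn23 : θ₂ ≠ θ₃) :
    u a' θ₂ < u a θ₂ := by
  rcases lt_or_eq_of_le hu3 with h3s | h3e
  · -- strict at both ends: convex choice
    have hconv := hcc {a, a'} a (by simp)
    have hmem := hconv.segment_subset ((mem_uc_iff Θ u hne θL).mpr ⟨hL, huL⟩)
      ((mem_uc_iff Θ u hne θ₃).mpr ⟨h3, h3s⟩) (openSegment_subset_segment ℝ _ _ hseg)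
    exact ((mem_uc_iff Θ u hne θ₂).mp hmem).2
  · -- indifference at the right end: regular indifferences
    exact hri a a' θL hL θ₃ h3 θ₂ (openSegment_subset_segment ℝ _ _ hseg) hn2L hn23 huL h3e.symm

/-- Key lemma: weak preference at two points of `Θ` gives weak preference strictly between. -/
lemma keyLemma {n : ℕ} {A : Type*} (Θ : Set (Fin n → ℝ)) (hΘ : Convex ℝ Θ)
    (hopen : IsOpen Θ) (u : A → (Fin n → ℝ) → ℝ)
    (hcc : ConvexChoice Θ u) (hri : RegularIndiff Θ u)
    {a a' : A} (hne : a ≠ a') {θ₁ θ₃ : Fin n → ℝ}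
    (h1 : θ₁ ∈ Θ) (h3 : θ₃ ∈ Θ) (hu1 : u a' θ₁ ≤ u a θ₁) (hu3 : u a' θ₃ ≤ u a θ₃)
    {s : ℝ} (hs0 : 0 < s) (hs1 : s < 1) (h13 : θ₁ ≠ θ₃) :
    u a' (θ₁ + s • (θ₃ - θ₁)) ≤ u a (θ₁ + s • (θ₃ - θ₁)) := by
  set θ₂ := θ₁ + s • (θ₃ - θ₁) with hθ₂
  have hn21 : θ₂ ≠ θ₁ := by
    have h := lineInj θ₁ θ₃ h13 (show s ≠ (0:ℝ) by linarith)
    rwa [zero_smul, add_zero] at h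
  have hn23 : θ₂ ≠ θ₃ := by
    have h := lineInj θ₁ θ₃ h13 (show s ≠ (1:ℝ) by linarith)
    rwa [one_smul, add_sub_cancel] at h
  have hseg : θ₂ ∈ openSegment ℝ θ₁ θ₃ := by
    have h := lineSeg θ₁ θ₃ hs0 hs1
    rwa [zero_smul, add_zero, one_smul, add_sub_cancel] at h
  have h2Θ : θ₂ ∈ Θ := hΘ.segment_subset h1 h3 (openSegment_subset_segment ℝ _ _ hseg)
  by_contra hcon
  push_neg at hcon
  rcases lt_or_eq_of_le hu1 with h1s | h1e
  · -- strict at θ₁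
    exact absurd (strictLeft Θ u hcc hri hne h1 h3 h1s hu3 hseg hn21 hn23) (by linarith)
  · -- indifference at θ₁: extend past θ₁
    have hc : Continuous fun r : ℝ => θ₁ + r • (θ₃ - θ₁) := by
      apply Continuous.add continuous_const
      exact continuous_id.smul continuous_const
    have hnh : (fun r : ℝ => θ₁ + r • (θ₃ - θ₁)) ⁻¹' Θ ∈ nhds (0:ℝ) := by
      apply (hopen.preimage hc).mem_nhds
      simpa using h1
    obtain ⟨ε, hε, hball⟩ := Metric.mem_nhds_iff.mp hnh
    set e := ε / 2 with he
    have he0 : 0 < e := by positivity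
    have h0Θ : θ₁ + (-e) • (θ₃ - θ₁) ∈ Θ := by
      apply hball
      simp only [Metric.mem_ball, Real.dist_eq, sub_zero, abs_neg, abs_of_pos he0]
      linarith
    set θ₀ := θ₁ + (-e) • (θ₃ - θ₁) with hθ₀
    have hn01 : θ₀ ≠ θ₁ := by
      have h := lineInj θ₁ θ₃ h13 (show -e ≠ (0:ℝ) by linarith)
      rwa [zero_smul, add_zero] at h
    have hn02 : θ₀ ≠ θ₂ := lineInj θ₁ θ₃ h13 (show -e ≠ s by linarith)
    have hseg02 : θ₂ ∈ openSegment ℝ θ₀ θ₃ := by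
      have h := lineSeg θ₁ θ₃ (show -e < s by linarith) hs1
      rwa [one_smul, add_sub_cancel] at h
    have hseg01 : θ₁ ∈ openSegment ℝ θ₀ θ₂ := by
      have h := lineSeg θ₁ θ₃ (show -e < (0:ℝ) by linarith) hs0
      rwa [zero_smul, add_zero] at h
    have hseg01' : θ₁ ∈ openSegment ℝ θ₂ θ₀ := by
      rw [openSegment_symm]; exact hseg01
    rcases lt_trichotomy (u a' θ₀) (u a θ₀) with h0s | h0e | h0r
    · -- strict for a at θ₀
      exact absurd (strictLeft Θ u hcc hri hne h0Θ h3 h0s hu3 hseg02 (Ne.symm hn02) hn23)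
        (by linarith)
    · -- indifference at θ₀ too
      have := hri a' a θ₂ h2Θ θ₀ h0Θ θ₁ (openSegment_subset_segment ℝ _ _ hseg01')
        (Ne.symm hn21) (Ne.symm hn01) hcon h0e
      linarith
    · -- strict for a' at θ₀: convex choice for a'
      have hconv := hcc {a, a'} a' (by simp)
      have hmem := hconv.segment_subset ((mem_uc_iff' Θ u hne θ₀).mpr ⟨h0Θ, by linarith⟩)
        ((mem_uc_iff' Θ u hne θ₂).mpr ⟨h2Θ, hcon⟩)
        (openSegment_subset_segment ℝ _ _ hseg01)
      have := ((mem_uc_iff' Θ u hne θ₁).mp hmem).2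
      linarith

/-- for open convex `Θ`, convex choice and regular indifferences imply convex
weak choice. -/
theorem convexChoice_regularIndiff_implies_convexWeakChoice {n : ℕ} {A : Type*}
    (Θ : Set (Fin n → ℝ)) (hΘ : Convex ℝ Θ) (hopen : IsOpen Θ)
    (u : A → (Fin n → ℝ) → ℝ)
    (hcc : ConvexChoice Θ u) (hri : RegularIndiff Θ u) :
    ∀ a a' : A, Convex ℝ {θ ∈ Θ | u a' θ ≤ u a θ} := by
  intro a a'
  by_cases ha : a = a'
  · subst ha
    have : {θ ∈ Θ | u a θ ≤ u a θ} = Θ := by ext θ; simp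
    rw [this]; exact hΘ
  · intro x hx y hy p q hp hq hpq
    refine ⟨hΘ hx.1 hy.1 hp hq hpq, ?_⟩
    by_cases hxy : x = y
    · subst hxy
      have : p • x + q • x = x := by rw [← add_smul, hpq, one_smul]
      rw [this]; exact hx.2
    by_cases hq0 : q = 0
    · have hp1 : p = 1 := by linarith
      subst hq0 hp1; simpa using hx.2
    by_cases hp0 : p = 0
    · have hq1 : q = 1 := by linarith
      subst hp0 hq1; simpa using hy.2
    have hq0' : 0 < q := lt_of_le_of_ne hq (Ne.symm hq0)
    have hq1 : q < 1 := by
      have : 0 < p := lt_of_le_of_ne hp (Ne.symm hp0)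
      linarith
    have hcomb : p • x + q • y = x + q • (y - x) := by
      rw [smul_sub]
      have : p = 1 - q := by linarith
      subst this
      module
    rw [hcomb]
    exact keyLemma Θ hΘ hopen u hcc hri ha hx.1 hy.1 hx.2 hy.2 hq0' hq1 hxy
end

section
/- If there is a direction α ∈ ℝⁿ \ {0} such that f(a,·) : ℝⁿ → ℝ is DSC in direction α for every a ∈ A, then f is one-dimensional: there exists f̃ : A × ℝ → ℝ such that sign(f(a,θ)) = sign(f̃(a, α·θ)) for all a ∈ A and θ ∈ ℝⁿ. -/
open Finset

/-- a family DSC in a common direction is one-dimensional. -/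
theorem common_direction_implies_one_dimensional {n : ℕ} {A : Type*}
    (f : A → (Fin n → ℝ) → ℝ) (α : Fin n → ℝ) (hα : α ≠ 0)
    (h : ∀ a : A, DSCdir (Set.univ : Set (Fin n → ℝ)) (f a) α) :
    ∃ ftilde : A → ℝ → ℝ, ∀ (a : A) (θ : Fin n → ℝ),
      Real.sign (f a θ) = Real.sign (ftilde a (dotp α θ)) := by
 classical
  have hpos : 0 < dotp α α := by
    have hne : ∑ i, α i * α i ≠ 0 := by
      intro h0
      apply hα
      funext i
      have hnn : ∀ j ∈ Finset.univ, 0 ≤ α j * α j := fun j _ => mul_self_nonneg _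
      have := (Finset.sum_eq_zero_iff_of_nonneg hnn).mp h0 i (Finset.mem_univ i)
      have := mul_self_eq_zero.mp this
      simpa using this
    have hnn : 0 ≤ ∑ i, α i * α i := Finset.sum_nonneg fun j _ => mul_self_nonneg _
    exact lt_of_le_of_ne hnn (Ne.symm hne)
  refine ⟨fun a x => f a ((x / dotp α α) • α), fun a θ => ?_⟩
  set x := dotp α θ with hx
  set θx : Fin n → ℝ := (x / dotp α α) • α with hθx
  have hdot : dotp α θx = x := by
    have : dotp α θx = (x / dotp α α) * dotp α α := by
      simp only [hθx, dotp, Pi.smul_apply, smul_eq_mul, Finset.mul_sum]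
      congr 1; funext i; ring
    rw [this]; field_simp
  have hcomm : ∀ u v : Fin n → ℝ, dotp (u - v) α = dotp α u - dotp α v := by
    intro u v
    simp only [dotp]
    rw [← Finset.sum_sub_distrib]
    congr 1; funext i; simp [Pi.sub_apply]; ring
  have h1 : Real.sign (f a θx) ≤ Real.sign (f a θ) := by
    apply h a θ (Set.mem_univ _) θx (Set.mem_univ _)
    rw [hcomm, hdot]; simp [hx]
  have h2 : Real.sign (f a θ) ≤ Real.sign (f a θx) := by
    apply h a θx (Set.mem_univ _) θ (Set.mem_univ _)
    rw [hcomm, hdot]; simp [hx]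
  exact le_antisymm h2 h1
end

section
/- If u has connected choice and thin indifferences, then every locally incentive compatible mechanism with finite range is incentive compatible. -/
open Finset

/-- Connected choice: from any choice set, the set of types uniquely choosing an action is
connected (possibly empty). -/
def ConnectedChoice {n : ℕ} {A : Type*} (Θ : Set (Fin n → ℝ))
    (u : A → (Fin n → ℝ) → ℝ) : Prop :=
  ∀ (B : Set A), ∀ a ∈ B, IsPreconnected (UniqueChoice Θ u B a)

/-- Thin indifferences: the weak-optimality set is contained in the closure of the
strict-optimality set. -/
def ThinIndiff {n : ℕ} {A : Type*} (Θ : Set (Fin n → ℝ))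
    (u : A → (Fin n → ℝ) → ℝ) : Prop :=
  ∀ (B : Set A), ∀ a ∈ B,
    {θ ∈ Θ | ∀ b ∈ B, u b θ ≤ u a θ} ⊆ closure {θ ∈ Θ | ∀ b ∈ B, b ≠ a → u b θ < u a θ}

/-- Auxiliary: a preconnected set covered by two pieces with both pieces nonempty must have
a point of one piece in the closure of the other. -/
lemma touch_of_preconnected {X : Type*} [TopologicalSpace X] {Q Y Z : Set X}
    (hpre : IsPreconnected Q) (hsub : ∀ q ∈ Q, q ∈ Y ∨ q ∈ Z)
    (hY : ∃ y ∈ Q, y ∈ Y) (hZ : ∃ z ∈ Q, z ∈ Z) :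
    ∃ p ∈ Q, (p ∈ Y ∧ p ∈ closure Z) ∨ (p ∈ Z ∧ p ∈ closure Y) := by
  by_contra hno
  push_neg at hno
  obtain ⟨y, hyQ, hyY⟩ := hY
  obtain ⟨z, hzQ, hzZ⟩ := hZ
  have hQsub : Q ⊆ (closure Z)ᶜ ∪ (closure Y)ᶜ := by
    intro q hq
    rcases hsub q hq with hqY | hqZ
    · exact Or.inl (fun hc => (hno q hq).1 hqY hc)
    · exact Or.inr (fun hc => (hno q hq).2 hqZ hc)
  have h1 : (Q ∩ (closure Z)ᶜ).Nonempty :=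
    ⟨y, hyQ, fun hc => (hno y hyQ).1 hyY hc⟩
  have h2 : (Q ∩ (closure Y)ᶜ).Nonempty :=
    ⟨z, hzQ, fun hc => (hno z hzQ).2 hzZ hc⟩
  obtain ⟨x, hxQ, hx1, hx2⟩ :=
    hpre _ _ isClosed_closure.isOpen_compl isClosed_closure.isOpen_compl hQsub h1 h2
  rcases hsub x hxQ with hxY | hxZ
  · exact hx2 (subset_closure hxY)
  · exact hx1 (subset_closure hxZ)

/-- connected choice and thin indifferences imply every locally IC mechanism
with finite range is IC. -/
theorem connectedChoice_thinIndiff_localIC_implies_IC {n : ℕ} {A : Type*}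
    (Θ : Set (Fin n → ℝ)) (hΘ : IsConnected Θ) (u : A → (Fin n → ℝ) → ℝ)
    (hcc : ConnectedChoice Θ u) (hti : ThinIndiff Θ u)
    (m : (Fin n → ℝ) → A) (hfin : (m '' Θ).Finite) (hm : LocalIC Θ u m) :
    IC Θ u m := by
  classical
  -- The master lemma: for any finite menu `S ⊆ m '' Θ` and `t ∉ S`, one cannot have both
  -- an envier of `t` that strictly prefers `t` to everything in `S` (a "Z-witness") and a
  -- holder of `t` weakly preferring `t` to everything in `S` (an "X-anchor").
  have master : ∀ (k : ℕ) (S : Finset A), (↑S ⊆ m '' Θ) →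
      (hfin.toFinset \ S).card ≤ k →
      ∀ t, t ∈ m '' Θ → t ∉ S →
      ∀ τ, τ ∈ Θ → (∀ y ∈ S, u y τ < u t τ) → u (m τ) τ < u t τ →
      ∀ ζ, ζ ∈ Θ → m ζ = t → (∀ y ∈ S, u y ζ ≤ u t ζ) → False := by
    intro k
    induction k with
    | zero =>
      intro S _ hcard t htB htS _ _ _ _ _ _ _ _
      have ht : t ∈ hfin.toFinset \ S :=
        Finset.mem_sdiff.2 ⟨hfin.mem_toFinset.2 htB, htS⟩
      have h0 : (hfin.toFinset \ S) = ∅ := Finset.card_eq_zero.1 (Nat.le_zero.1 hcard)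
      rw [h0] at ht
      exact absurd ht (Finset.notMem_empty t)
    | succ k ih =>
      intro S hSB hcard t htB htS τ hτ hchain henvy ζ hζ hmζ hzchain
      -- cardinality bookkeeping for recursive calls
      have cardlem : ∀ x : A, x ∈ m '' Θ → x ∉ S →
          (hfin.toFinset \ insert x S).card ≤ k := by
        intro x hxB hxS
        have hx : x ∈ hfin.toFinset \ S :=
          Finset.mem_sdiff.2 ⟨hfin.mem_toFinset.2 hxB, hxS⟩
        have hsub : hfin.toFinset \ insert x S ⊆ (hfin.toFinset \ S).erase x := by
          intro a ha
          rcases Finset.mem_sdiff.1 ha with ⟨h1, h2⟩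
          refine Finset.mem_erase.2 ⟨?_, Finset.mem_sdiff.2 ⟨h1, ?_⟩⟩
          · rintro rfl; exact h2 (Finset.mem_insert_self _ _)
          · intro haS; exact h2 (Finset.mem_insert_of_mem haS)
        have hlt : (hfin.toFinset \ insert x S).card < k + 1 :=
          lt_of_le_of_lt (Finset.card_le_card hsub)
            (lt_of_lt_of_le (Finset.card_erase_lt_of_mem hx) hcard)
        exact Nat.lt_succ_iff.1 hlt
      -- the menu and the strict cell of `t` over it
      set M : Set A := insert t (↑S : Set A) with hMdef
      have htM : t ∈ M := Set.mem_insert _ _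
      set Q : Set (Fin n → ℝ) := UniqueChoice Θ u M t with hQdef
      have hQpre : IsPreconnected Q := hcc M t htM
      have hQmem : ∀ ξ, ξ ∈ Q → ξ ∈ Θ ∧ ∀ b ∈ M, b ≠ t → u b ξ < u t ξ := fun ξ h => h
      have hQof : ∀ ξ, ξ ∈ Θ → (∀ b ∈ M, b ≠ t → u b ξ < u t ξ) → ξ ∈ Q :=
        fun ξ h1 h2 => ⟨h1, h2⟩
      -- membership of the Z-witness in the cell
      have hτQ : τ ∈ Q := by
        refine hQof τ hτ ?_
        intro b hb hbt
        rcases Set.mem_insert_iff.1 hb with rfl | hbS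
        · exact absurd rfl hbt
        · exact hchain b hbS
      -- the two pieces of the cell
      set Zp : Set (Fin n → ℝ) := {ξ | ξ ∈ Q ∧ u (m ξ) ξ < u t ξ} with hZpdef
      set Yp : Set (Fin n → ℝ) := {ξ | ξ ∈ Q ∧ u t ξ ≤ u (m ξ) ξ} with hYpdef
      have hτZp : τ ∈ Zp := ⟨hτQ, henvy⟩
      -- the anchor lies in the closure of the cell (thin indifferences)
      have hζcl : ζ ∈ closure Q := by
        apply hti M t htM
        refine ⟨hζ, ?_⟩
        intro b hb
        rcases Set.mem_insert_iff.1 hb with rfl | hbS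
        · exact le_refl _
        · exact hzchain b hbS
      -- a non-envier of `t` inside the cell (local IC at the anchor)
      obtain ⟨εζ, hεζ, hballζ⟩ := hm ζ hζ
      obtain ⟨η, hηQ, hηd⟩ := Metric.mem_closure_iff.1 hζcl εζ hεζ
      have hηY : η ∈ Yp := by
        have h2 := (hballζ η (hQmem η hηQ).1 (by rw [dist_comm]; exact hηd)).2
        rw [hmζ] at h2
        exact ⟨hηQ, h2⟩
      -- the common continuation, used after extracting the fresh action `h`
      have continue' : ∀ h, h ∈ m '' Θ → h ∉ M →
          ∀ w, w ∈ Θ → (∀ y ∈ S, u y w < u t w) → u h w < u t w → u (m w) w < u t w →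
          ∀ π, π ∈ Θ → m π = h → u t π ≤ u h π → (∀ y ∈ S, u y π < u t π) → False := by
        intro h hhB hhM w hw hwchain hwh hwenvy π hπ hmπ htπ hπchain
        have hht : h ≠ t := fun hc => hhM (hc ▸ Set.mem_insert _ _)
        have hhS : h ∉ S := fun hc => hhM (Set.mem_insert_iff.2 (Or.inr hc))
        rcases le_or_gt (u h ζ) (u t ζ) with hle | hlt
        · -- case (α): the anchor survives adding `h` to the menu
          refine ih (insert h S) ?_ (cardlem h hhB hhS) t htB ?_ w hw ?_ hwenvy
            ζ hζ hmζ ?_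
          · rw [Finset.coe_insert]
            exact Set.insert_subset hhB hSB
          · intro hc
            rcases Finset.mem_insert.1 hc with hc1 | hc2
            · exact hht hc1.symm
            · exact htS hc2
          · intro y hy
            rcases Finset.mem_insert.1 hy with rfl | hyS
            · exact hwh
            · exact hwchain y hyS
          · intro y hy
            rcases Finset.mem_insert.1 hy with rfl | hyS
            · exact hle
            · exact hzchain y hyS
        · -- case (β): the anchor itself envies `h`; switch the target to `h`
          refine ih (insert t S) ?_ (cardlem t htB htS) h hhB ?_ ζ hζ ?_ ?_
            π hπ hmπ ?_
          · rw [Finset.coe_insert]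
            exact Set.insert_subset htB hSB
          · intro hc
            rcases Finset.mem_insert.1 hc with hc1 | hc2
            · exact hht hc1
            · exact hhS hc2
          · intro y hy
            rcases Finset.mem_insert.1 hy with rfl | hyS
            · exact hlt
            · exact lt_of_le_of_lt (hzchain y hyS) hlt
          · rw [hmζ]; exact hlt
          · intro y hy
            rcases Finset.mem_insert.1 hy with rfl | hyS
            · exact htπ
            · exact le_trans (le_of_lt (hπchain y hyS)) htπ
      -- extract a touching point between the two pieces
      have hsub : ∀ q ∈ Q, q ∈ Yp ∨ q ∈ Zp := by
        intro q hq
        rcases le_or_gt (u t q) (u (m q) q) with h1 | h1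
        · exact Or.inl ⟨hq, h1⟩
        · exact Or.inr ⟨hq, h1⟩
      obtain ⟨p, hpQ, hcross⟩ := touch_of_preconnected hQpre hsub
        ⟨η, hηY.1, hηY⟩ ⟨τ, hτQ, hτZp⟩
      rcases hcross with ⟨hpY, hpcl⟩ | ⟨hpZ, hpcl⟩
      · -- touching from the Y-side: `p` is a non-envier adjacent to enviers
        obtain ⟨εp, hεp, hballp⟩ := hm p (hQmem p hpQ).1
        obtain ⟨τ', hτ'Z, hτ'd⟩ := Metric.mem_closure_iff.1 hpcl εp hεp
        have hτ'Θ : τ' ∈ Θ := (hQmem τ' hτ'Z.1).1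
        have hloc := hballp τ' hτ'Θ (by rw [dist_comm]; exact hτ'd)
        -- `m p ≠ t`
        have hpt : m p ≠ t := by
          intro hc
          have h2 := hloc.2
          rw [hc] at h2
          exact absurd (lt_of_le_of_lt h2 hτ'Z.2) (lt_irrefl _)
        -- `m p ∉ M`
        have hpM : m p ∉ M := by
          intro hc
          have hlt := (hQmem p hpQ).2 (m p) hc hpt
          exact absurd (lt_of_le_of_lt hpY.2 hlt) (lt_irrefl _)
        have hpB : m p ∈ m '' Θ := ⟨p, (hQmem p hpQ).1, rfl⟩
        refine continue' (m p) hpB hpM τ' hτ'Θ ?_ ?_ hτ'Z.2 p (hQmem p hpQ).1 rfl hpY.2 ?_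
        · intro y hy
          refine (hQmem τ' hτ'Z.1).2 y (Set.mem_insert_iff.2 (Or.inr hy)) ?_
          rintro rfl; exact htS hy
        · exact lt_of_le_of_lt hloc.2 hτ'Z.2
        · intro y hy
          refine (hQmem p hpQ).2 y (Set.mem_insert_iff.2 (Or.inr hy)) ?_
          rintro rfl; exact htS hy
      · -- touching from the Z-side: `p` is an envier adjacent to non-enviers
        obtain ⟨εp, hεp, hballp⟩ := hm p (hQmem p hpQ).1
        obtain ⟨ρ, hρY, hρd⟩ := Metric.mem_closure_iff.1 hpcl εp hεp
        have hρΘ : ρ ∈ Θ := (hQmem ρ hρY.1).1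
        have hloc := hballp ρ hρΘ (by rw [dist_comm]; exact hρd)
        -- `m ρ ≠ t`
        have hρt : m ρ ≠ t := by
          intro hc
          have h1 := hloc.1
          rw [hc] at h1
          exact absurd (lt_of_le_of_lt h1 hpZ.2) (lt_irrefl _)
        -- `m ρ ∉ M`
        have hρM : m ρ ∉ M := by
          intro hc
          have hlt := (hQmem ρ hρY.1).2 (m ρ) hc hρt
          exact absurd (lt_of_le_of_lt hρY.2 hlt) (lt_irrefl _)
        have hρB : m ρ ∈ m '' Θ := ⟨ρ, hρΘ, rfl⟩
        refine continue' (m ρ) hρB hρM p (hQmem p hpQ).1 ?_ ?_ hpZ.2 ρ hρΘ rfl hρY.2 ?_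
        · intro y hy
          refine (hQmem p hpQ).2 y (Set.mem_insert_iff.2 (Or.inr hy)) ?_
          rintro rfl; exact htS hy
        · exact lt_of_le_of_lt hloc.1 hpZ.2
        · intro y hy
          refine (hQmem ρ hρY.1).2 y (Set.mem_insert_iff.2 (Or.inr hy)) ?_
          rintro rfl; exact htS hy
  -- conclude IC from the master lemma with the empty menu
  intro θ hθ τ hτ
  by_contra hlt
  push_neg at hlt
  exact master hfin.toFinset.card ∅ (by simp) (by simp) (m τ) ⟨τ, hτ, rfl⟩
    (Finset.notMem_empty _) θ hθ (fun y hy => absurd hy (Finset.notMem_empty y)) hlt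
    τ hτ rfl (fun y hy => absurd hy (Finset.notMem_empty y))
end

section
/- If u violates connected choice on some finite choice set, then there exists a mechanism m : Θ → A that is locally incentive compatible but not incentive compatible. -/
open Finset

/-- a violation of connected choice on a finite choice set yields a mechanism
that is locally IC but not IC. -/
theorem not_connectedChoice_implies_localIC_not_IC {n : ℕ} {A : Type*}
    (Θ : Set (Fin n → ℝ)) (hΘ : IsConnected Θ) (u : A → (Fin n → ℝ) → ℝ)
    (B : Set A) (hB : B.Finite) (a : A) (ha : a ∈ B)
    (hne : (UniqueChoice Θ u B a).Nonempty)
    (hnc : ¬ IsPreconnected (UniqueChoice Θ u B a)) :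
    ∃ m : (Fin n → ℝ) → A, LocalIC Θ u m ∧ ¬ IC Θ u m := by
  classical
  set Θa := UniqueChoice Θ u B a with hΘa
  -- B \ {a} is nonempty
  have hBa : (B \ {a} : Set A).Nonempty := by
    by_contra h
    rw [Set.not_nonempty_iff_eq_empty, Set.diff_eq_empty] at h
    apply hnc
    have : Θa = Θ := by
      ext θ
      simp only [hΘa, UniqueChoice, Set.mem_setOf_eq, Set.mem_sep_iff]
      refine ⟨fun h' => h'.1, fun hθ => ⟨hθ, fun b hb hba => absurd (h hb) hba⟩⟩
    rw [this]; exact hΘ.isPreconnected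
  -- maximizers over B \ {a}
  have hmax : ∀ θ : Fin n → ℝ, ∃ b ∈ B \ {a}, ∀ c ∈ B \ {a}, u c θ ≤ u b θ := fun θ =>
    Set.exists_max_image (B \ {a}) (fun b => u b θ) hB.diff hBa
  -- separation
  rw [IsPreconnected] at hnc
  push_neg at hnc
  obtain ⟨U, V, hU, hV, hsub, hUne, hVne, hUV⟩ := hnc
  set Θ1 := Θa ∩ U with hΘ1
  have hdisj : ∀ θ, θ ∈ Θ1 → θ ∈ V → False := by
    intro θ h1 h2
    have : θ ∈ Θa ∩ (U ∩ V) := ⟨h1.1, h1.2, h2⟩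
    rw [hUV] at this; exact this
  -- the mechanism
  set m : (Fin n → ℝ) → A := fun θ =>
    if θ ∈ Θ1 then a else Classical.choose (hmax θ) with hm
  have hm1 : ∀ θ, θ ∈ Θ1 → m θ = a := fun θ h => by simp [hm, h]
  have hm2 : ∀ θ, θ ∉ Θ1 → m θ ∈ B \ {a} ∧ ∀ c ∈ B \ {a}, u c θ ≤ u (m θ) θ := by
    intro θ h
    have := Classical.choose_spec (hmax θ)
    simp only [hm, if_neg h]
    exact ⟨this.1, this.2⟩
  -- if θ ∈ Θa and b ∈ B \ {a}, then u b θ < u a θ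
  have hkey : ∀ θ ∈ Θa, ∀ b ∈ B \ {a}, u b θ < u a θ := by
    intro θ hθ b hb
    exact hθ.2 b hb.1 hb.2
  -- if θ ∈ Θ \ Θa, then u a θ ≤ u (m θ) θ  (for θ ∉ Θ1)
  have hkey2 : ∀ θ ∈ Θ, θ ∉ Θa → θ ∉ Θ1 → u a θ ≤ u (m θ) θ := by
    intro θ hθ hθa hθ1
    have : ¬ ∀ b ∈ B, b ≠ a → u b θ < u a θ := fun h => hθa ⟨hθ, h⟩
    push_neg at this
    obtain ⟨b, hb, hba, hub⟩ := this
    exact le_trans hub ((hm2 θ hθ1).2 b ⟨hb, hba⟩)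
  refine ⟨m, ?_, ?_⟩
  · -- Local IC
    intro θ hθ
    by_cases hθ1 : θ ∈ Θ1
    · -- θ ∈ Θ1 ⊆ U open: pick ball inside U
      obtain ⟨ε, hε, hball⟩ := Metric.isOpen_iff.1 hU θ hθ1.2
      refine ⟨ε, hε, fun τ hτ hd => ?_⟩
      have hτU : τ ∈ U := hball (Metric.mem_ball.2 hd)
      by_cases hτ1 : τ ∈ Θ1
      · rw [hm1 θ hθ1, hm1 τ hτ1]; exact ⟨le_refl _, le_refl _⟩
      · have hτa : τ ∉ Θa := fun h => hτ1 ⟨h, hτU⟩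
        rw [hm1 θ hθ1]
        constructor
        · exact le_of_lt (hkey θ hθ1.1 (m τ) (hm2 τ hτ1).1)
        · exact hkey2 τ hτ hτa hτ1
    · by_cases hθa : θ ∈ Θa
      · -- θ ∈ Θa \ U ⊆ V: pick ball inside V
        have hθV : θ ∈ V := by
          rcases hsub hθa with h | h
          · exact absurd ⟨hθa, h⟩ hθ1
          · exact h
        obtain ⟨ε, hε, hball⟩ := Metric.isOpen_iff.1 hV θ hθV
        refine ⟨ε, hε, fun τ hτ hd => ?_⟩
        have hτV : τ ∈ V := hball (Metric.mem_ball.2 hd)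
        have hτ1 : τ ∉ Θ1 := fun h => hdisj τ h hτV
        exact ⟨(hm2 θ hθ1).2 (m τ) (hm2 τ hτ1).1, (hm2 τ hτ1).2 (m θ) (hm2 θ hθ1).1⟩
      · -- θ ∉ Θa: any ε works
        refine ⟨1, one_pos, fun τ hτ _ => ?_⟩
        by_cases hτ1 : τ ∈ Θ1
        · rw [hm1 τ hτ1]
          exact ⟨hkey2 θ hθ hθa hθ1, le_of_lt (hkey τ hτ1.1 (m θ) (hm2 θ hθ1).1)⟩
        · exact ⟨(hm2 θ hθ1).2 (m τ) (hm2 τ hτ1).1, (hm2 τ hτ1).2 (m θ) (hm2 θ hθ1).1⟩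
  · -- not IC
    intro hic
    obtain ⟨θ2, hθ2a, hθ2V⟩ := hVne
    obtain ⟨θ1, hθ1a, hθ1U⟩ := hUne
    have hθ2n1 : θ2 ∉ Θ1 := fun h => hdisj θ2 h hθ2V
    have h1 : m θ1 = a := hm1 θ1 ⟨hθ1a, hθ1U⟩
    have := hic θ2 hθ2a.1 θ1 hθ1a.1
    rw [h1] at this
    exact absurd this (not_le.2 (hkey θ2 hθ2a (m θ2) (hm2 θ2 hθ2n1).1))
end

section
/- Assume every action is uniquely most-preferred by some type. If u violates thin indifferences on some finite set, then there is a mechanism that is locally incentive compatible but not incentive compatible. -/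
open Finset

/-- if every action is uniquely most-preferred by some type and thin
indifferences fails on some finite set, then some mechanism is locally IC but not IC. -/
theorem not_thinIndiff_implies_localIC_not_IC {n : ℕ} {A : Type*}
    (Θ : Set (Fin n → ℝ)) (hΘ : IsConnected Θ) (u : A → (Fin n → ℝ) → ℝ)
    (hmp : ∀ a : A, ∃ θ ∈ Θ, ∀ b : A, b ≠ a → u b θ < u a θ)
    (B : Set A) (hB : B.Finite) (a : A) (ha : a ∈ B)
    (θ₀ : Fin n → ℝ) (hθ₀ : θ₀ ∈ Θ) (ε : ℝ) (hε : 0 < ε)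
    (hweak : ∀ b ∈ B, u b θ₀ ≤ u a θ₀)
    (hviol : ∀ θ' ∈ Θ, dist θ' θ₀ < ε → ∃ b ∈ B, b ≠ a ∧ u a θ' ≤ u b θ') :
    ∃ m : (Fin n → ℝ) → A, LocalIC Θ u m ∧ ¬ IC Θ u m := by
  classical
  -- B' = B \ {a} is finite and nonempty
  obtain ⟨b₀, hb₀B, hb₀ne, _⟩ := hviol θ₀ hθ₀ (by simpa using hε)
  have hB' : (B \ {a}).Finite := hB.subset Set.diff_subset
  have hB'ne : (B \ {a}).Nonempty := ⟨b₀, hb₀B, hb₀ne⟩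
  have hmax : ∀ θ : Fin n → ℝ, ∃ b ∈ B \ {a}, ∀ b' ∈ B \ {a}, u b' θ ≤ u b θ := by
    intro θ
    obtain ⟨b, hb, hmax⟩ := Set.exists_max_image (B \ {a}) (fun b => u b θ) hB' hB'ne
    exact ⟨b, hb, hmax⟩
  set m : (Fin n → ℝ) → A := fun θ =>
    if θ = θ₀ then a else Classical.choose (hmax θ) with hm
  have hm0 : m θ₀ = a := by simp [hm]
  have hmmem : ∀ θ, θ ≠ θ₀ → m θ ∈ B \ {a} := by
    intro θ hθ
    simp only [hm, if_neg hθ]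
    exact (Classical.choose_spec (hmax θ)).1
  have hmbest : ∀ θ, θ ≠ θ₀ → ∀ b' ∈ B \ {a}, u b' θ ≤ u (m θ) θ := by
    intro θ hθ
    simp only [hm, if_neg hθ]
    exact (Classical.choose_spec (hmax θ)).2
  refine ⟨m, ?_, ?_⟩
  · -- Local IC
    intro θ hθ
    refine ⟨ε, hε, fun τ hτ hdist => ?_⟩
    by_cases hτ0 : τ = θ₀
    · by_cases hθ0 : θ = θ₀
      · rw [hτ0, hθ0]; exact ⟨le_refl _, le_refl _⟩
      · constructor
        · rw [hτ0, hm0]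
          have hdθ : dist θ θ₀ < ε := by
            rw [hτ0] at hdist; rw [dist_comm]; exact hdist
          obtain ⟨b, hbB, hbne, hble⟩ := hviol θ hθ hdθ
          exact hble.trans (hmbest θ hθ0 b ⟨hbB, hbne⟩)
        · rw [hτ0, hm0]
          exact hweak _ (hmmem θ hθ0).1
    · by_cases hθ0 : θ = θ₀
      · subst hθ0
        constructor
        · rw [hm0]; exact hweak _ (hmmem τ hτ0).1
        · rw [hm0]
          obtain ⟨b, hbB, hbne, hble⟩ := hviol τ hτ hdist
          exact hble.trans (hmbest τ hτ0 b ⟨hbB, hbne⟩)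
      · exact ⟨hmbest θ hθ0 _ (hmmem τ hτ0), hmbest τ hτ0 _ (hmmem θ hθ0)⟩
  · -- not IC
    intro hIC
    obtain ⟨θa, hθa, hθbest⟩ := hmp a
    have hθa0 : θa ≠ θ₀ := by
      rintro rfl
      exact absurd (hb₀ne.elim : b₀ = a → False) (by
        obtain ⟨b, hbB, hbne, hble⟩ := hviol θa hθa (by simpa using hε)
        exact fun _ => not_lt.2 hble (hθbest b hbne))
    have h1 : u (m θ₀) θa ≤ u (m θa) θa := hIC θa hθa θ₀ hθ₀
    rw [hm0] at h1
    have h2 : u (m θa) θa < u a θa := hθbest _ (hmmem θa hθa0).2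
    exact absurd h1 (not_le.2 h2)
end
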